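/- Let A be a locally noetherian Grothendieck category and C a Serre subcategory. Suppose L ∈ A satisfies: for every C-isomorphism u': A' → B' with A', B' finitely generated, Hom(u',L) is an isomorphism. Then for every C-isomorphism u: A → B that is an epimorphism, the induced map Hom(B,L) → Hom(A,L) is an isomorphism. -/

import Mathlib

/-!
Since `u` is an epimorphism, `Hom(u, L)` is injective, and a map `X → L` descends along `u` as
soon as it kills `ker u ∈ C`; so it suffices that every map from an object `M ∈ C` to `L`
vanishes. Test such a map against a noetherian generator `G → M`: it factors through the image
`I`, which lies in `C` and is finitely generated, and `I → 0` is a `C`-isomorphism of finitely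
generated objects, so `Hom(I, L) = 0` by hypothesis.

Noetherian objects are finitely generated because in an AB5 category the preimages in `G` of
the terms of a filtered union of subobjects exhaust `G`; a maximal one among them is then all
of `G`.
-/

open CategoryTheory CategoryTheory.Limits

universe v u

/-- Finitely generated object: `Hom(X, -)` preserves filtered colimits of monomorphisms,
expressed via the factorization property. -/
def IsFGObj {A : Type u} [Category.{v} A] (X : A) : Prop :=
  ∀ (J : Type v) [SmallCategory J] [IsFiltered J] (D : J ⥤ A),
    (∀ ⦃j j' : J⦄ (f : j ⟶ j'), Mono (D.map f)) →
    ∀ (c : Cocone D), IsColimit c →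
    ∀ (g : X ⟶ c.pt), ∃ (j : J) (g' : X ⟶ D.obj j), g' ≫ c.ι.app j = g

/-- A morphism `u` is a `C`-isomorphism if both its kernel and cokernel satisfy `C`. -/
def IsCIso {A : Type u} [Category.{v} A] [Abelian A] (C : A → Prop)
    {X Y : A} (u : X ⟶ Y) : Prop :=
  C (kernel u) ∧ C (cokernel u)

namespace CategoryTheory

theorem IsFiltered.exists_forall_le_of_wellFoundedGT {J : Type*} [Category J]
    [IsFiltered J] {α : Type*} [PartialOrder α] [WellFoundedGT α] (S : J → α)
    (hS : ∀ ⦃j j' : J⦄, (j ⟶ j') → S j ≤ S j') : ∃ j₀, ∀ j, S j ≤ S j₀ := by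
  obtain ⟨_, ⟨j₀, rfl⟩, hmax⟩ := wellFounded_gt.has_min (Set.range S)
    (Set.range_nonempty_iff_nonempty.2 IsFiltered.nonempty)
  refine ⟨j₀, fun j => ?_⟩
  have hj₀ : S j₀ = S (IsFiltered.max j j₀) :=
    (hS (IsFiltered.rightToMax j j₀)).eq_of_not_lt (hmax _ ⟨_, rfl⟩)
  exact hj₀ ▸ hS (IsFiltered.leftToMax j j₀)

namespace Limits

variable {A : Type u} [Category.{v} A] (J : Type*) [Category J] [IsConnected J]

noncomputable def colimitConstIso (Y : A) : colimit ((Functor.const J).obj Y) ≅ Y :=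
  colimit.isoColimitCocone ⟨_, isColimitConstCocone J Y⟩

@[simp]
theorem ι_colimitConstIso_hom (Y : A) (j : J) :
    colimit.ι ((Functor.const J).obj Y) j ≫ (colimitConstIso J Y).hom = 𝟙 Y :=
  colimit.isoColimitCocone_ι_hom _ j

/-- The colimit functor preserves the pullback square, and the pullback of the isomorphism
`colim.map c.ι` is an isomorphism. -/
theorem isIso_colimitDesc_pullbackSnd [HasPullbacks A] [HasColimitsOfShape J A]
    [HasExactColimitsOfShape J A] {D : J ⥤ A} {c : Cocone D} (hc : IsColimit c) {X : A}
    (z : X ⟶ c.pt) :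
    IsIso (colimit.desc _ (Cocone.mk X (pullback.snd c.ι ((Functor.const J).map z)))) := by
  have : IsIso (colim.map c.ι) := by
    have : colim.map c.ι =
        (colimit.isoColimitCocone ⟨c, hc⟩).hom ≫ (colimitConstIso J c.pt).inv := by
      rw [Iso.eq_comp_inv]
      exact colimit.hom_ext fun j => by simp
    rw [this]
    infer_instance
  have : IsIso (colim.map (pullback.snd c.ι ((Functor.const J).map z))) :=
    ((IsPullback.of_hasPullback c.ι ((Functor.const _).map z)).map colim).isIso_snd_of_isIso
  have : colimit.desc _ (Cocone.mk X (pullback.snd c.ι ((Functor.const J).map z))) =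
      colim.map (pullback.snd c.ι ((Functor.const J).map z)) ≫ (colimitConstIso J X).hom :=
    colimit.hom_ext fun j => by simp
  rw [this]
  infer_instance

end Limits

open scoped ZeroObject

theorem isIso_app_of_forall_subobjectMk_le {A : Type u} [Category.{v} A] [Balanced A]
    {J : Type*} [Category J] {P : J ⥤ A} [HasColimit P] {X : A}
    (τ : P ⟶ (Functor.const J).obj X) [∀ j, Mono (τ.app j)]
    [Epi (colimit.desc P (Cocone.mk X τ))] {j₀ : J}
    (hj₀ : ∀ j, Subobject.mk (τ.app j) ≤ Subobject.mk (τ.app j₀)) : IsIso (τ.app j₀) := by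
  let ρ : P ⟶ (Functor.const J).obj (P.obj j₀) :=
    { app j := Subobject.ofMkLEMk _ _ (hj₀ j)
      naturality j j' φ := by
        rw [← cancel_mono (τ.app j₀)]
        simp [Subobject.ofMkLEMk_comp, τ.naturality φ] }
  have hfac : colimit.desc P (Cocone.mk X τ) = colimit.desc P (Cocone.mk _ ρ) ≫ τ.app j₀ :=
    colimit.hom_ext fun j => by simp [ρ, Subobject.ofMkLEMk_comp]
  have : Epi (τ.app j₀) := epi_of_epi_fac hfac.symm
  exact isIso_of_mono_of_epi _

theorem isCIso_zero_of_mem {A : Type u} [Category.{v} A] [Abelian A] (C : A → Prop)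
    (hsub : ∀ {X Y : A} (f : X ⟶ Y), Mono f → C Y → C X) {X : A} (hX : C X) :
    IsCIso C (0 : X ⟶ 0) := by
  have : IsZero (cokernel (0 : X ⟶ 0)) := by
    have : Epi (0 : X ⟶ 0) := (isZero_zero A).epi _
    exact isZero_cokernel_of_epi _
  exact ⟨hsub (kernel.ι _) inferInstance hX,
    hsub (0 : cokernel (0 : X ⟶ 0) ⟶ X) (this.mono _) hX⟩

variable {A : Type u} [Category.{v} A] [Abelian A] [HasFilteredColimits A] [AB5 A]

theorem IsNoetherianObject.isFGObj (X : A) [IsNoetherianObject X] : IsFGObj X := by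
  intro J _ _ D hD c hc z
  have := IsFiltered.isConnected J
  have : ∀ j j' (φ : j ⟶ j'), Mono (D.map φ) := fun _ _ φ => hD φ
  have (j : J) : Mono (c.ι.app j) := hc.mono_ι_app_of_isFiltered j
  have : Mono c.ι := NatTrans.mono_of_mono_app _
  let τ := pullback.snd c.ι ((Functor.const J).map z)
  have (j : J) : Mono (τ.app j) := (NatTrans.mono_iff_mono_app τ).1 inferInstance j
  obtain ⟨j₀, hj₀⟩ := IsFiltered.exists_forall_le_of_wellFoundedGT
    (fun j => Subobject.mk (τ.app j)) fun j j' φ =>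
      Subobject.mk_le_mk_of_comm ((pullback c.ι ((Functor.const J).map z)).map φ)
        (by simp [τ.naturality φ])
  have := isIso_colimitDesc_pullbackSnd J hc z
  have := isIso_app_of_forall_subobjectMk_le τ hj₀
  refine ⟨j₀, inv (τ.app j₀) ≫ (pullback.fst c.ι ((Functor.const J).map z)).app j₀, ?_⟩
  rw [Category.assoc, ← NatTrans.comp_app, pullback.condition, NatTrans.comp_app,
    IsIso.inv_hom_id_assoc, Functor.const_map_app]

theorem IsFGObj.of_epi {X Y : A} (hX : IsFGObj X) (e : X ⟶ Y) [Epi e] : IsFGObj Y := by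
  intro J _ _ D hD c hc z
  obtain ⟨j, y, hy⟩ := hX J D hD c hc (e ≫ z)
  have : ∀ j j' (φ : j ⟶ j'), Mono (D.map φ) := fun _ _ φ => hD φ
  have := hc.mono_ι_app_of_isFiltered j
  have w : kernel.ι e ≫ y = 0 := by
    rw [← cancel_mono (c.ι.app j), Category.assoc, hy, kernel.condition_assoc, zero_comp,
      zero_comp]
  exact ⟨j, Abelian.epiDesc e y w, by rw [← cancel_epi e, Abelian.comp_epiDesc_assoc, hy]⟩

section Serre

variable (C : A → Prop) (hsub : ∀ {X Y : A} (f : X ⟶ Y), Mono f → C Y → C X)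
  {L : A} (hL : ∀ ⦃X Y : A⦄ (u : X ⟶ Y), IsFGObj X → IsFGObj Y → IsCIso C u →
    Function.Surjective (fun g : Y ⟶ L => u ≫ g))
include hsub hL

theorem hom_eq_zero_of_isFGObj {X : A} (hfg : IsFGObj X) (hX : C X) (h : X ⟶ L) :
    h = 0 := by
  have : IsNoetherianObject (0 : A) := isNoetherianObject_of_isZero (isZero_zero A)
  obtain ⟨g, rfl⟩ := hL (0 : X ⟶ 0) hfg (IsNoetherianObject.isFGObj (0 : A))
    (isCIso_zero_of_mem C hsub hX) h
  exact zero_comp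

theorem hom_eq_zero_of_isSeparating {𝒢 : Set A}
    (h𝒢 : ObjectProperty.IsSeparating (· ∈ 𝒢)) (hnoeth : ∀ G ∈ 𝒢, IsNoetherianObject G)
    {M : A} (hM : C M) (h : M ⟶ L) : h = 0 := by
  refine h𝒢 _ _ fun G hG e => ?_
  have := hnoeth G hG
  have hfg : IsFGObj (image e) := (IsNoetherianObject.isFGObj G).of_epi (factorThruImage e)
  have hI : C (image e) := hsub (image.ι e) inferInstance hM
  rw [comp_zero, ← image.fac e, Category.assoc,
    hom_eq_zero_of_isFGObj C hsub hL hfg hI (image.ι e ≫ h), comp_zero]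

end Serre

end CategoryTheory

open CategoryTheory

theorem statement4_general {A : Type u} [Category.{v} A] [Abelian A]
    [HasFilteredColimits A] [AB5 A]
    (_hln : ∃ G : Set A, ObjectProperty.IsSeparating (· ∈ G) ∧ ∀ X ∈ G, IsNoetherianObject X)
    (C : A → Prop)
    (_hsub : ∀ {X Y : A} (f : X ⟶ Y), Mono f → C Y → C X)
    (L : A)
    (hL : ∀ ⦃A' B' : A⦄ (u' : A' ⟶ B'), IsFGObj A' → IsFGObj B' → IsCIso C u' →
      Function.Bijective (fun g : B' ⟶ L => u' ≫ g))
    {X Y : A} (u : X ⟶ Y) (hu : IsCIso C u) (hepi : Epi u) :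
    Function.Bijective (fun g : Y ⟶ L => u ≫ g) := by
  obtain ⟨𝒢, h𝒢, hnoeth⟩ := _hln
  have hker (f : X ⟶ L) : kernel.ι u ≫ f = 0 :=
    hom_eq_zero_of_isSeparating C _hsub (fun _ _ u' hX hY hu' => (hL u' hX hY hu').2)
      h𝒢 hnoeth hu.1 _
  exact ⟨fun _ _ h => (cancel_epi u).1 h,
    fun f => ⟨Abelian.epiDesc u f (hker f), Abelian.comp_epiDesc u f (hker f)⟩⟩

/-- Let `A` be a locally noetherian Grothendieck category and `C` a Serre
subcategory.  Suppose `L ∈ A` satisfies: for every `C`-isomorphism `u' : A' → B'` with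
`A'`, `B'` finitely generated, `Hom(u', L)` is an isomorphism.  Then for every
`C`-isomorphism `u : A → B` that is a(n) epimorphism, the induced map
`Hom(B, L) → Hom(A, L)` is an isomorphism. -/
theorem statement4 {A : Type u} [Category.{v} A] [Abelian A] [HasColimits A]
    [HasFilteredColimits A] [AB5 A] [WellPowered.{v} A]
    (_hln : ∃ G : Set A, ObjectProperty.IsSeparating (· ∈ G) ∧ ∀ X ∈ G, IsNoetherianObject X)
    (C : A → Prop)
    (_hrepl : ∀ {X Y : A}, (X ≅ Y) → C X → C Y)
    (_hsub : ∀ {X Y : A} (f : X ⟶ Y), Mono f → C Y → C X)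
    (_hquot : ∀ {X Y : A} (f : X ⟶ Y), Epi f → C X → C Y)
    (_hext : ∀ (S : ShortComplex A), S.ShortExact → C S.X₁ → C S.X₃ → C S.X₂)
    (L : A)
    (hL : ∀ ⦃A' B' : A⦄ (u' : A' ⟶ B'), IsFGObj A' → IsFGObj B' → IsCIso C u' →
      Function.Bijective (fun g : B' ⟶ L => u' ≫ g))
    {X Y : A} (u : X ⟶ Y) (hu : IsCIso C u) (hepi : Epi u) :
    Function.Bijective (fun g : Y ⟶ L => u ≫ g) :=
  statement4_general _hln C _hsub L hL u hu hepi
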